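/- Let S ⊂ ℝⁿ be nonempty closed and x ∈ ℝⁿ \ S. Then the Clarke subdifferential of the distance function d_S at x is contained in the closed convex hull of {(x − s)/d_S(x) : s ∈ Π_S(x)}. -/

import Mathlib

/-! Let `ξ` be a proximal subgradient of `d_S` at `y ∉ S` and `s` a nearest point of `y` in `S`.
Since `d_S` is 1-Lipschitz, `‖ξ‖ ≤ 1`; since `d_S` decreases at unit rate along the segment from
`y` to `s`, `⟪ξ, y − s⟫ ≥ d_S(y) = ‖y − s‖`. Equality in Cauchy–Schwarz then forces
`ξ = (y − s)/d_S(y)`, i.e. `‖ξ‖ = 1` and `y − d_S(y) ξ ∈ S`. These two conditions are closed in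
`(y, ξ)`, so they pass to limiting subgradients, and the closed convex hulls follow. -/

open Filter Topology
open scoped RealInnerProductSpace

variable {n : ℕ}

/-- The proximal subdifferential of a real-valued function:
`ξ ∈ ∂_P φ(x)` iff `φ(y) ≥ φ(x) + ⟪ξ, y−x⟫ − σ‖y−x‖²` for `y` near `x`
(equivalently the liminf in the definition is `> −∞`). -/
def proxSubdiff (φ : EuclideanSpace ℝ (Fin n) → ℝ) (x : EuclideanSpace ℝ (Fin n)) :
    Set (EuclideanSpace ℝ (Fin n)) :=
  {ξ | ∃ σ > (0 : ℝ), ∃ δ > (0 : ℝ), ∀ y, ‖y - x‖ ≤ δ →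
    φ x + ⟪ξ, y - x⟫ - σ * ‖y - x‖ ^ 2 ≤ φ y}

/-- The limiting (Mordukhovich) subdifferential: limits of proximal subgradients
`ξₖ ∈ ∂_P φ(xₖ)` with `xₖ → x` and `φ(xₖ) → φ(x)`. -/
def limitingSubdiff (φ : EuclideanSpace ℝ (Fin n) → ℝ) (x : EuclideanSpace ℝ (Fin n)) :
    Set (EuclideanSpace ℝ (Fin n)) :=
  {ξ | ∃ (xs ξs : ℕ → EuclideanSpace ℝ (Fin n)),
    (∀ k, ξs k ∈ proxSubdiff φ (xs k)) ∧ Tendsto xs atTop (𝓝 x) ∧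
    Tendsto (fun k => φ (xs k)) atTop (𝓝 (φ x)) ∧ Tendsto ξs atTop (𝓝 ξ)}

/-- The set `{(x − s) / d_S(x) : s ∈ Π_S(x)}`. -/
def nearestPointDirections {E : Type*} [NormedAddCommGroup E] [NormedSpace ℝ E]
    (S : Set E) (x : E) : Set E :=
  {ξ | ∃ s ∈ S, dist x s = Metric.infDist x S ∧ ξ = (Metric.infDist x S)⁻¹ • (x - s)}

theorem mem_nearestPointDirections_iff {E : Type*} [NormedAddCommGroup E] [NormedSpace ℝ E]
    {S : Set E} {x ξ : E} (hx : Metric.infDist x S ≠ 0) :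
    ξ ∈ nearestPointDirections S x ↔ ‖ξ‖ = 1 ∧ x - Metric.infDist x S • ξ ∈ S := by
  have hd : 0 ≤ Metric.infDist x S := Metric.infDist_nonneg
  constructor
  · rintro ⟨s, hs, hdist, rfl⟩
    rw [dist_eq_norm] at hdist
    refine ⟨?_, ?_⟩
    · rw [norm_smul, norm_inv, Real.norm_of_nonneg hd, hdist, inv_mul_cancel₀ hx]
    · rwa [smul_inv_smul₀ hx, sub_sub_cancel]
  · rintro ⟨hξ, hs⟩
    refine ⟨_, hs, ?_, ?_⟩
    · rw [dist_eq_norm, sub_sub_cancel, norm_smul, Real.norm_of_nonneg hd, hξ, mul_one]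
    · rw [sub_sub_cancel, inv_smul_smul₀ hx]

theorem inner_le_of_mem_proxSubdiff {φ : EuclideanSpace ℝ (Fin n) → ℝ}
    {y ξ v : EuclideanSpace ℝ (Fin n)} {c : ℝ} (hξ : ξ ∈ proxSubdiff φ y)
    (hv : ∀ᶠ t in 𝓝[>] 0, φ (y + t • v) ≤ φ y + t * c) : ⟪ξ, v⟫ ≤ c := by
  obtain ⟨σ, -, δ, hδ, hprox⟩ := hξ
  have hsmall : ∀ᶠ t in 𝓝[>] (0 : ℝ), ‖t • v‖ ≤ δ := by
    have : Tendsto (fun t : ℝ => ‖t • v‖) (𝓝 0) (𝓝 0) := by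
      simpa using ((continuous_id.smul continuous_const).norm.tendsto (0 : ℝ) :
        Tendsto (fun t : ℝ => ‖t • v‖) _ _)
    exact nhdsWithin_le_nhds (this.eventually (eventually_le_nhds hδ))
  have hlim : Tendsto (fun t : ℝ => c + σ * t * ‖v‖ ^ 2) (𝓝[>] 0) (𝓝 c) := by
    have : Tendsto (fun t : ℝ => c + σ * t * ‖v‖ ^ 2) (𝓝 0) (𝓝 (c + σ * 0 * ‖v‖ ^ 2)) :=
      (by fun_prop : Continuous fun t : ℝ => c + σ * t * ‖v‖ ^ 2).tendsto 0
    simpa using this.mono_left nhdsWithin_le_nhds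
  refine ge_of_tendsto hlim ?_
  filter_upwards [hv, hsmall, self_mem_nhdsWithin] with t hφt ht (ht0 : 0 < t)
  have h := hprox (y + t • v) (by rwa [add_sub_cancel_left])
  rw [add_sub_cancel_left, real_inner_smul_right, norm_smul, Real.norm_of_nonneg ht0.le] at h
  refine le_of_mul_le_mul_left ?_ ht0
  nlinarith

theorem norm_le_of_mem_proxSubdiff {φ : EuclideanSpace ℝ (Fin n) → ℝ} {K : NNReal}
    (hφ : LipschitzWith K φ) {y ξ : EuclideanSpace ℝ (Fin n)} (hξ : ξ ∈ proxSubdiff φ y) :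
    ‖ξ‖ ≤ K := by
  have hv : ∀ᶠ t in 𝓝[>] (0 : ℝ), φ (y + t • ξ) ≤ φ y + t * (K * ‖ξ‖) := by
    filter_upwards [self_mem_nhdsWithin] with t (ht0 : 0 < t)
    have h := (hφ.dist_le_mul (y + t • ξ) y)
    rw [Real.dist_eq, dist_eq_norm, add_sub_cancel_left, norm_smul,
      Real.norm_of_nonneg ht0.le] at h
    linarith [le_of_abs_le h]
  have h := inner_le_of_mem_proxSubdiff hξ hv
  rw [real_inner_self_eq_norm_sq] at h
  rcases (norm_nonneg ξ).eq_or_lt with h0 | h0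
  · rw [← h0]; exact K.2
  · nlinarith

theorem proxSubdiff_infDist_subset {S : Set (EuclideanSpace ℝ (Fin n))} (hS : S.Nonempty)
    (hcl : IsClosed S) {y : EuclideanSpace ℝ (Fin n)} (hy : y ∉ S) :
    proxSubdiff (fun z => Metric.infDist z S) y ⊆ nearestPointDirections S y := by
  intro ξ hξ
  set d := Metric.infDist y S
  have hd : 0 < d := (hcl.notMem_iff_infDist_pos hS).mp hy
  obtain ⟨s, hs, hds⟩ := hcl.exists_infDist_eq_dist hS y
  have hys : ‖y - s‖ = d := (dist_eq_norm y s).symm.trans hds.symm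
  have htoward : ∀ᶠ t in 𝓝[>] (0 : ℝ),
      Metric.infDist (y + t • (s - y)) S ≤ d + t * (-d) := by
    filter_upwards [Ioo_mem_nhdsGT (zero_lt_one' ℝ)] with t ⟨ht0, ht1⟩
    calc Metric.infDist (y + t • (s - y)) S ≤ ‖(y + t • (s - y)) - s‖ :=
          dist_eq_norm _ s ▸ Metric.infDist_le_dist_of_mem hs
      _ = ‖(1 - t) • (y - s)‖ := by congr 1; module
      _ = d + t * (-d) := by
          rw [norm_smul, Real.norm_of_nonneg (by linarith), hys]; ring
  have hinner : d ≤ ⟪ξ, y - s⟫ := by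
    have := inner_le_of_mem_proxSubdiff hξ htoward
    rw [← neg_sub, inner_neg_right] at this
    linarith
  have hξ1 : ‖ξ‖ ≤ 1 := by
    simpa using norm_le_of_mem_proxSubdiff (Metric.lipschitz_infDist_pt S) hξ
  have hcs : ⟪ξ, y - s⟫ ≤ ‖ξ‖ * d := hys ▸ real_inner_le_norm _ _
  have hnorm : ‖ξ‖ = 1 := le_antisymm hξ1 (le_of_mul_le_mul_right (by linarith) hd)
  have heq : ⟪ξ, y - s⟫ = ‖ξ‖ * ‖y - s‖ := by
    rw [hnorm, hys, one_mul]
    exact le_antisymm (by simpa [hnorm] using hcs) hinner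
  rw [inner_eq_norm_mul_iff_real, hnorm, hys, one_smul] at heq
  refine (mem_nearestPointDirections_iff hd.ne').2 ⟨hnorm, ?_⟩
  rwa [heq, sub_sub_cancel]

theorem limitingSubdiff_infDist_subset {S : Set (EuclideanSpace ℝ (Fin n))} (hS : S.Nonempty)
    (hcl : IsClosed S) {x : EuclideanSpace ℝ (Fin n)} (hx : x ∉ S) :
    limitingSubdiff (fun y => Metric.infDist y S) x ⊆ nearestPointDirections S x := by
  rintro ξ ⟨xs, ξs, hprox, hxs, -, hξs⟩
  have hd : Metric.infDist x S ≠ 0 := ((hcl.notMem_iff_infDist_pos hS).mp hx).ne'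
  have hnear : ∀ᶠ k in atTop,
      ‖ξs k‖ = 1 ∧ xs k - Metric.infDist (xs k) S • ξs k ∈ S := by
    filter_upwards [hxs.eventually (hcl.isOpen_compl.mem_nhds hx)] with k (hk : xs k ∉ S)
    exact (mem_nearestPointDirections_iff ((hcl.notMem_iff_infDist_pos hS).mp hk).ne').1
      (proxSubdiff_infDist_subset hS hcl hk (hprox k))
  refine (mem_nearestPointDirections_iff hd).2 ⟨?_, ?_⟩
  · exact tendsto_nhds_unique hξs.norm
      (tendsto_const_nhds.congr' (hnear.mono fun k hk => hk.1.symm))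
  · refine hcl.mem_of_tendsto ?_ (hnear.mono fun k hk => hk.2)
    exact hxs.sub (((Metric.continuous_infDist_pt S).tendsto x).comp hxs |>.smul hξs)

/-- The Clarke subdifferential of the distance function `d_S` at `x ∉ S` (which, `d_S`
being Lipschitz, is the closed convex hull of the limiting subdifferential) is contained
in the closed convex hull of `{(x − s)/d_S(x) : s ∈ Π_S(x)}`. -/
theorem stmt6 (S : Set (EuclideanSpace ℝ (Fin n))) (hS : S.Nonempty) (hcl : IsClosed S)
    (x : EuclideanSpace ℝ (Fin n)) (hx : x ∉ S) :
    closure (convexHull ℝ (limitingSubdiff (fun y => Metric.infDist y S) x)) ⊆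
      closure (convexHull ℝ
        {ξ | ∃ s ∈ S, dist x s = Metric.infDist x S ∧
          ξ = (Metric.infDist x S)⁻¹ • (x - s)}) :=
  closure_mono (convexHull_mono (limitingSubdiff_infDist_subset hS hcl hx))
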